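/- arXiv:2302.13426 — 6 statements merged into one kernel-verified Lean document; each statement's English description precedes it below -/
import Mathlib

section
/- Fix an integer I ≥ 2, a real α > 0, and i ∈ {1,…,I}. Let X be a standard Gaussian random vector on ℝ^I and set ω = α·Q·e_i + X. Define the random vector p(ω) ∈ ℝ^I by p_j(ω) = exp(⟨αQe_j, ω⟩ − (α²/2)⟨e_j, Qe_j⟩) / Σ_{k=1}^I exp(⟨αQe_k, ω⟩ − (α²/2)⟨e_k, Qe_k⟩). Then the probability law of p(ω) coincides with the probability law of softmax(α²·e_i + Z), where Z is a centered multivariate Gaussian vector on ℝ^I with covariance matrix α²Q. (Canonical logistic-normal law of the market maker's equilibrium posterior.) -/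
open MeasureTheory ProbabilityTheory Matrix

noncomputable section

/-- The standard Gaussian measure on `ℝ^I` (mean 0, identity covariance). -/
def stdGaussian (I : ℕ) : Measure (Fin I → ℝ) :=
  Measure.pi fun _ => gaussianReal 0 1

/-- The matrix `Q = Id − (1/I)·𝟙𝟙ᵀ`. -/
def Qmat (I : ℕ) : Matrix (Fin I) (Fin I) ℝ :=
  1 - (I : ℝ)⁻¹ • Matrix.of fun _ _ => (1 : ℝ)

/-- `softmax(v)_j = e^{v_j} / Σ_k e^{v_k}`. -/
def softmax {I : ℕ} (v : Fin I → ℝ) : Fin I → ℝ :=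
  fun j => Real.exp (v j) / ∑ k, Real.exp (v k)

/-- The law of the centered Gaussian vector `Z` on `ℝ^I` with covariance matrix `α²Q`
(realized as `α·Q·x` with `x` standard Gaussian; since `Q` is a symmetric projection,
the covariance of `α·Q·x` is `α²Q`). -/
def lawZ (I : ℕ) (α : ℝ) : Measure (Fin I → ℝ) :=
  (stdGaussian I).map fun x => α • (Qmat I).mulVec x

/-- The market maker's equilibrium posterior, as a function of the order flow `ω`:
`p_j(ω) = exp(⟨αQe_j, ω⟩ − (α²/2)⟨e_j, Qe_j⟩) / Σ_k exp(⟨αQe_k, ω⟩ − (α²/2)⟨e_k, Qe_k⟩)`.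
Here `(Qe_j)_k = Q_{kj}` and `⟨e_j, Qe_j⟩ = Q_{jj}`. -/
def postEq (I : ℕ) (α : ℝ) (ω : Fin I → ℝ) : Fin I → ℝ :=
  fun j => Real.exp (α * (∑ k, Qmat I k j * ω k) - α ^ 2 / 2 * Qmat I j j) /
    ∑ l, Real.exp (α * (∑ k, Qmat I k l * ω k) - α ^ 2 / 2 * Qmat I l l)

/-! Since `Q` is a symmetric projection and its diagonal entries are all `1 - 1/I`, the posterior
is `softmax (α Q ω)` (the term `(α²/2) Q_jj` shifts every exponent equally), and
`α Q (α Q e_i + x) = α² e_i + α Q x - (α²/I) 𝟙`. Softmax ignores constant shifts, so the two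
random vectors agree pointwise as functions of the standard Gaussian sample. -/

lemma Qmat_apply (I : ℕ) (k j : Fin I) :
    Qmat I k j = (if k = j then 1 else 0) - (I : ℝ)⁻¹ := by
  simp [Qmat, Matrix.one_apply]

lemma Qmat_apply_self (I : ℕ) (j : Fin I) : Qmat I j j = 1 - (I : ℝ)⁻¹ := by
  simp [Qmat_apply]

lemma Qmat_transpose (I : ℕ) : (Qmat I)ᵀ = Qmat I := by
  ext k j
  simp [Qmat_apply, eq_comm]

lemma Qmat_mul_self (I : ℕ) : Qmat I * Qmat I = Qmat I := by
  ext k j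
  have hI : (I : ℝ) ≠ 0 := by have := k.pos; positivity
  simp [Matrix.mul_apply, Qmat_apply, sub_mul, mul_sub, Finset.sum_sub_distrib, Finset.card_univ]
  field_simp
  ring

lemma Qmat_mulVec_col (I : ℕ) (i : Fin I) :
    Qmat I *ᵥ (fun k => Qmat I k i) = fun k => Qmat I k i := by
  funext k
  simpa only [Matrix.mulVec, dotProduct, Matrix.mul_apply]
    using congrFun (congrFun (Qmat_mul_self I) k) i

lemma softmax_add_const {I : ℕ} (v : Fin I → ℝ) (c : ℝ) :
    softmax (fun j => v j + c) = softmax v := by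
  funext j
  simp only [softmax, Real.exp_add, ← Finset.sum_mul]
  exact mul_div_mul_right _ _ (Real.exp_ne_zero c)

@[fun_prop]
lemma measurable_softmax (I : ℕ) : Measurable (softmax : (Fin I → ℝ) → Fin I → ℝ) := by
  unfold softmax
  fun_prop

lemma postEq_eq_softmax (I : ℕ) (α : ℝ) (ω : Fin I → ℝ) :
    postEq I α ω = softmax (α • (Qmat I)ᵀ *ᵥ ω) := by
  rw [← softmax_add_const _ (-(α ^ 2 / 2 * (1 - (I : ℝ)⁻¹)))]
  funext j
  simp only [postEq, softmax, Qmat_apply_self, Pi.smul_apply, smul_eq_mul, Matrix.mulVec,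
    dotProduct, Matrix.transpose_apply, sub_eq_add_neg]

lemma smul_Qmat_mulVec_smul_col_add (I : ℕ) (α : ℝ) (i : Fin I) (x : Fin I → ℝ) :
    α • Qmat I *ᵥ (α • (fun k => Qmat I k i) + x) =
      fun j => (α ^ 2 • (Pi.single i 1 : Fin I → ℝ) + α • Qmat I *ᵥ x) j
        + -(α ^ 2 * (I : ℝ)⁻¹) := by
  funext j
  simp only [Matrix.mulVec_add, Matrix.mulVec_smul, Qmat_mulVec_col]
  simp only [Qmat_apply, eq_comm, Pi.smul_apply, Pi.add_apply, smul_eq_mul, Pi.single_apply]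
  split_ifs <;> ring

theorem canonical_posterior_law_general (I : ℕ) (α : ℝ) (i : Fin I) :
    (stdGaussian I).map
        (fun x => postEq I α (α • (fun k => Qmat I k i) + x)) =
      (lawZ I α).map
        (fun z => softmax (α ^ 2 • (Pi.single i 1 : Fin I → ℝ) + z)) := by
  rw [lawZ, Measure.map_map (by fun_prop) (by fun_prop)]
  congr 1
  funext x
  rw [Function.comp_apply, postEq_eq_softmax, Qmat_transpose, smul_Qmat_mulVec_smul_col_add,
    softmax_add_const]

/-- Canonical logistic-normal law of the market maker's equilibrium posterior: with
`ω = α·Q·e_i + X` for a standard Gaussian vector `X`, the law of `p(ω)` coincides with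
the law of `softmax(α²·e_i + Z)` where `Z` is centered Gaussian with covariance `α²Q`. -/
theorem canonical_posterior_law (I : ℕ) (hI : 2 ≤ I) (α : ℝ) (hα : 0 < α) (i : Fin I) :
    (stdGaussian I).map
        (fun x => postEq I α (α • (fun k => Qmat I k i) + x)) =
      (lawZ I α).map
        (fun z => softmax (α ^ 2 • (Pi.single i 1 : Fin I → ℝ) + z)) :=
  canonical_posterior_law_general I α i

end
end

section
/- (No-arbitrage.) Let a < b be reals, n ∈ ℕ, let φ_1,…,φ_n : [a,b] → ℝ and η : [a,b] → ℝ be continuous, and let F : [a,b] × ℝ^n → ℝ be such that x ↦ F(x,c) is continuous for every c ∈ ℝ^n. For continuous W : [a,b] → ℝ define the overlap vector K(W) = (∫_a^b W(x)φ_i(x) dx)_{i=1,…,n} ∈ ℝ^n and the expected utility J(W) = ∫_a^b W(x)·(η(x) − F(x, K(W))) dx. If there exist continuous W₁, W₂ : [a,b] → ℝ with K(W₁) = K(W₂) and J(W₁) ≠ J(W₂), then J is unbounded above: for every M ∈ ℝ there exists a continuous W : [a,b] → ℝ with J(W) > M. -/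
/-!
Moving along the line `W_t = W₂ + t (W₁ - W₂)` never changes the overlap vector, since `K` is
linear and `K(W₁) = K(W₂)`. The prices `F(·, K(W_t))` are therefore frozen along the line, so `J`
is affine in `t` there, with slope `J(W₁) - J(W₂) ≠ 0`; letting `t → ±∞` makes `J` exceed
any bound.
-/

open MeasureTheory Set

noncomputable section

/-- The overlap vector `K(W) = (∫_a^b W(x)φ_i(x) dx)_{i=1,…,n}` of a portfolio `W` with the
market maker's noise-adjusted beliefs `φ_1, …, φ_n`. -/
def overlapVec (a b : ℝ) (n : ℕ) (φ : Fin n → ℝ → ℝ) (W : ℝ → ℝ) : Fin n → ℝ :=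
  fun i => ∫ x in a..b, W x * φ i x

/-- The insider's expected utility `J(W) = ∫_a^b W(x)·(η(x) − F(x, K(W))) dx`, where the
expected Arrow–Debreu prices depend on `W` only through the overlap vector `K(W)`. -/
def expectedUtility (a b : ℝ) (n : ℕ) (φ : Fin n → ℝ → ℝ) (η : ℝ → ℝ)
    (F : ℝ → (Fin n → ℝ) → ℝ) (W : ℝ → ℝ) : ℝ :=
  ∫ x in a..b, W x * (η x - F x (overlapVec a b n φ W))

open AffineMap

theorem integral_lineMap_mul {μ : Measure ℝ} {a b : ℝ} {W₁ W₂ h : ℝ → ℝ}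
    (h₁ : IntervalIntegrable (fun x => W₁ x * h x) μ a b)
    (h₂ : IntervalIntegrable (fun x => W₂ x * h x) μ a b) (t : ℝ) :
    ∫ x in a..b, lineMap W₂ W₁ t x * h x ∂μ =
      lineMap (∫ x in a..b, W₂ x * h x ∂μ) (∫ x in a..b, W₁ x * h x ∂μ) t := by
  have hpt : (fun x => lineMap W₂ W₁ t x * h x) =
      fun x => t * (W₁ x * h x - W₂ x * h x) + W₂ x * h x := by
    funext x
    rw [pi_lineMap_apply, lineMap_apply_ring']
    ring
  rw [hpt, intervalIntegral.integral_add ((h₁.sub h₂).const_mul t) h₂,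
    intervalIntegral.integral_const_mul, intervalIntegral.integral_sub h₁ h₂,
    lineMap_apply_ring']

theorem exists_lt_lineMap {y₀ y₁ : ℝ} (hy : y₀ ≠ y₁) (M : ℝ) : ∃ t : ℝ, M < lineMap y₀ y₁ t := by
  refine ⟨(M + 1 - y₀) / (y₁ - y₀), ?_⟩
  rw [lineMap_apply_ring', div_mul_cancel₀ _ (sub_ne_zero.mpr hy.symm)]
  linarith

section Portfolio

variable {a b : ℝ} {n : ℕ} {φ : Fin n → ℝ → ℝ} {W₁ W₂ : ℝ → ℝ}

theorem overlapVec_lineMap (hab : a ≤ b) (hφ : ∀ i, ContinuousOn (φ i) (Icc a b))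
    (hW₁ : ContinuousOn W₁ (Icc a b)) (hW₂ : ContinuousOn W₂ (Icc a b)) (t : ℝ) :
    overlapVec a b n φ (lineMap W₂ W₁ t) =
      lineMap (overlapVec a b n φ W₂) (overlapVec a b n φ W₁) t := by
  funext i
  rw [pi_lineMap_apply]
  exact integral_lineMap_mul ((hW₁.mul (hφ i)).intervalIntegrable_of_Icc hab)
    ((hW₂.mul (hφ i)).intervalIntegrable_of_Icc hab) t

theorem expectedUtility_lineMap {η : ℝ → ℝ} {F : ℝ → (Fin n → ℝ) → ℝ} (hab : a ≤ b)
    (hφ : ∀ i, ContinuousOn (φ i) (Icc a b)) (hη : ContinuousOn η (Icc a b))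
    (hF : ContinuousOn (fun x => F x (overlapVec a b n φ W₂)) (Icc a b))
    (hW₁ : ContinuousOn W₁ (Icc a b)) (hW₂ : ContinuousOn W₂ (Icc a b))
    (hK : overlapVec a b n φ W₁ = overlapVec a b n φ W₂) (t : ℝ) :
    expectedUtility a b n φ η F (lineMap W₂ W₁ t) =
      lineMap (expectedUtility a b n φ η F W₂) (expectedUtility a b n φ η F W₁) t := by
  have hprice : ContinuousOn (fun x => η x - F x (overlapVec a b n φ W₂)) (Icc a b) :=
    hη.sub hF
  simp only [expectedUtility]
  rw [overlapVec_lineMap hab hφ hW₁ hW₂, hK, lineMap_same_apply]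
  exact integral_lineMap_mul ((hW₁.mul hprice).intervalIntegrable_of_Icc hab)
    ((hW₂.mul hprice).intervalIntegrable_of_Icc hab) t

end Portfolio

/-- No-arbitrage: if two portfolios have the same overlap vector but different expected
utilities, then the insider's expected utility is unbounded above over continuous
portfolios. -/
theorem no_arbitrage (a b : ℝ) (hab : a < b) (n : ℕ)
    (φ : Fin n → ℝ → ℝ) (η : ℝ → ℝ) (F : ℝ → (Fin n → ℝ) → ℝ)
    (hφ : ∀ i, ContinuousOn (φ i) (Icc a b))
    (hη : ContinuousOn η (Icc a b))
    (hF : ∀ c : Fin n → ℝ, ContinuousOn (fun x => F x c) (Icc a b))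
    (W₁ W₂ : ℝ → ℝ)
    (hW₁ : ContinuousOn W₁ (Icc a b)) (hW₂ : ContinuousOn W₂ (Icc a b))
    (hK : overlapVec a b n φ W₁ = overlapVec a b n φ W₂)
    (hJ : expectedUtility a b n φ η F W₁ ≠ expectedUtility a b n φ η F W₂) :
    ∀ M : ℝ, ∃ W : ℝ → ℝ, ContinuousOn W (Icc a b) ∧
      M < expectedUtility a b n φ η F W := by
  intro M
  obtain ⟨t, ht⟩ := exists_lt_lineMap hJ.symm M
  refine ⟨lineMap W₂ W₁ t, ?_, ?_⟩
  · exact hW₂.lineMap hW₁ (continuousOn_const (c := t))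
  · rwa [expectedUtility_lineMap hab.le hφ hη (hF _) hW₁ hW₂ hK]

end
end

section
/- Let (Ω, ℱ, P) be a probability space, I ≥ 1 an integer, and p : Ω → ℝ^I a measurable random vector with p_j ≥ 0 for all j and Σ_{j=1}^I p_j = 1 almost surely. Define the I×I matrix S by S_{jj} = E[p_j] for all j and S_{jk} = −E[p_j p_k] for j ≠ k. Then S is symmetric positive semidefinite. -/
/-!
For every realisation `q` of the random vector, the matrix `diag q − q qᵀ` is positive semidefinite,
since `(∑ qⱼ xⱼ)² ≤ (∑ qⱼ) ∑ qⱼ xⱼ² ≤ ∑ qⱼ xⱼ²` by Cauchy–Schwarz. Adding the nonnegative diagonal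
`diag q²` gives the matrix with diagonal `qⱼ` and off-diagonal entries `−qⱼ qₖ`, and `S` is its
entrywise expectation; expectation preserves positive semidefiniteness because the quadratic form
commutes with the integral.
-/

open MeasureTheory Matrix

namespace Matrix

theorem posSemidef_of_integral {Ω n : Type*} [MeasurableSpace Ω] [Fintype n] {μ : Measure Ω}
    {M : Ω → Matrix n n ℝ} (hint : ∀ i j, Integrable (fun ω => M ω i j) μ)
    (hM : ∀ᵐ ω ∂μ, (M ω).PosSemidef) :
    (of fun i j => ∫ ω, M ω i j ∂μ).PosSemidef := by
  refine .of_dotProduct_mulVec_nonneg ?_ fun x => ?_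
  · ext i j
    exact integral_congr_ae (hM.mono fun ω hω => congrFun₂ hω.isHermitian i j)
  have quadratic_form : star x ⬝ᵥ ((of fun i j => ∫ ω, M ω i j ∂μ) *ᵥ x) =
      ∫ ω, star x ⬝ᵥ (M ω *ᵥ x) ∂μ := by
    simp only [star_trivial, dotProduct, mulVec, of_apply]
    rw [integral_finsetSum _ fun i _ =>
      (integrable_finsetSum _ fun j _ => (hint i j).mul_const _).const_mul _]
    refine Finset.sum_congr rfl fun i _ => ?_
    rw [integral_const_mul, integral_finsetSum _ fun j _ => (hint i j).mul_const _]
    simp only [integral_mul_const]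
  rw [quadratic_form]
  exact integral_nonneg_of_ae (hM.mono fun ω hω => hω.dotProduct_mulVec_nonneg x)

variable {n : Type*} [DecidableEq n]

theorem posSemidef_diagonal_sub_vecMulVec [Fintype n] {q : n → ℝ} (hq : 0 ≤ q)
    (hsum : ∑ i, q i ≤ 1) : (diagonal q - vecMulVec q q).PosSemidef := by
  refine .of_dotProduct_mulVec_nonneg ?_ fun x => ?_
  · simpa using (isHermitian_diagonal q).sub (posSemidef_vecMulVec_self_star q).isHermitian
  have quadratic_form : star x ⬝ᵥ ((diagonal q - vecMulVec q q) *ᵥ x) =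
      ∑ i, q i * x i ^ 2 - (∑ i, q i * x i) ^ 2 := by
    simp only [star_trivial, sub_mulVec, dotProduct_sub, vecMulVec_mulVec, dotProduct_smul,
      op_smul_eq_smul, smul_eq_mul]
    rw [dotProduct_comm x q, ← sq]
    simp only [dotProduct, mulVec_diagonal]
    congr 1
    exact Finset.sum_congr rfl fun i _ => by ring
  have weighted_sq_nonneg : 0 ≤ ∑ i, q i * x i ^ 2 :=
    Finset.sum_nonneg fun i _ => mul_nonneg (hq i) (sq_nonneg _)
  have cauchy_schwarz : (∑ i, q i * x i) ^ 2 ≤ (∑ i, q i) * ∑ i, q i * x i ^ 2 :=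
    Finset.sum_sq_le_sum_mul_sum_of_sq_le_mul _ (fun i _ => hq i)
      (fun i _ => mul_nonneg (hq i) (sq_nonneg _)) fun i _ => le_of_eq (by ring)
  rw [quadratic_form, sub_nonneg]
  exact cauchy_schwarz.trans (mul_le_of_le_one_left weighted_sq_nonneg hsum)

def hessianFactor (q : n → ℝ) : Matrix n n ℝ :=
  of fun j k => if j = k then q j else -(q j * q k)

theorem hessianFactor_eq (q : n → ℝ) :
    hessianFactor q = diagonal q - vecMulVec q q + diagonal (q ^ 2) := by
  ext j k
  by_cases h : j = k
  · subst h; simp [hessianFactor, vecMulVec, sq]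
  · simp [hessianFactor, vecMulVec, h]

variable [Fintype n]

theorem posSemidef_hessianFactor {q : n → ℝ} (hq : 0 ≤ q) (hsum : ∑ i, q i ≤ 1) :
    (hessianFactor q).PosSemidef := by
  rw [hessianFactor_eq]
  exact (posSemidef_diagonal_sub_vecMulVec hq hsum).add (.diagonal fun i => sq_nonneg (q i))

theorem abs_hessianFactor_apply_le_one {q : n → ℝ} (hq : 0 ≤ q) (hsum : ∑ i, q i ≤ 1)
    (j k : n) : |hessianFactor q j k| ≤ 1 := by
  have hle (i : n) : q i ≤ 1 :=
    (Finset.single_le_sum (fun i _ => hq i) (Finset.mem_univ i)).trans hsum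
  by_cases h : j = k
  · simp [hessianFactor, h, abs_of_nonneg (hq k), hle k]
  · simp only [hessianFactor, of_apply, h, if_false, abs_neg, abs_mul, abs_of_nonneg (hq _)]
    exact mul_le_one₀ (hle j) (hq k) (hle k)

end Matrix

theorem hessian_factor_posSemidef_general
    {Ω : Type*} [MeasurableSpace Ω] (P : Measure Ω) [IsProbabilityMeasure P]
    (I : ℕ) (p : Ω → Fin I → ℝ) (hmeas : Measurable p)
    (hp : ∀ᵐ ω ∂P, (∀ j, 0 ≤ p ω j) ∧ ∑ j, p ω j = 1) :
    (Matrix.of fun j k =>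
        if j = k then ∫ ω, p ω j ∂P else -∫ ω, p ω j * p ω k ∂P).PosSemidef := by
  have hint (j k : Fin I) : Integrable (fun ω => hessianFactor (p ω) j k) P := by
    refine .of_bound ?_ 1 ?_
    · by_cases h : j = k <;>
        simp only [hessianFactor, of_apply, h, if_true, if_false] <;> fun_prop
    · filter_upwards [hp] with ω hω
      exact abs_hessianFactor_apply_le_one hω.1 hω.2.le j k
  have hpsd : ∀ᵐ ω ∂P, (hessianFactor (p ω)).PosSemidef := by
    filter_upwards [hp] with ω hω
    exact posSemidef_hessianFactor hω.1 hω.2.le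
  convert posSemidef_of_integral hint hpsd using 2
  ext j k
  by_cases h : j = k <;> simp [hessianFactor, h, integral_neg]

/-- If `p` is a measurable random probability vector on `{1,…,I}` (nonnegative entries
summing to one almost surely), then the matrix `S` with `S_{jj} = E[p_j]` and
`S_{jk} = −E[p_j p_k]` for `j ≠ k` is symmetric positive semidefinite. -/
theorem hessian_factor_posSemidef
    {Ω : Type*} [MeasurableSpace Ω] (P : Measure Ω) [IsProbabilityMeasure P]
    (I : ℕ) (hI : 1 ≤ I) (p : Ω → Fin I → ℝ) (hmeas : Measurable p)
    (hp : ∀ᵐ ω ∂P, (∀ j, 0 ≤ p ω j) ∧ ∑ j, p ω j = 1) :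
    (Matrix.of fun j k =>
        if j = k then ∫ ω, p ω j ∂P else -∫ ω, p ω j * p ω k ∂P).PosSemidef :=
  hessian_factor_posSemidef_general P I p hmeas hp
end

section
/- (Pathwise Young integral.) Let a < b be reals and γ, δ ∈ (0,1] with γ + δ > 1. Let ω : [a,b] → ℝ be γ-Hölder and W : [a,b] → ℝ be δ-Hölder. Then there exists a real number 𝐼 such that the Riemann sums converge to 𝐼 as the mesh tends to zero: for every ε > 0 there exists ρ > 0 such that for every finite partition a = x_0 < x_1 < … < x_n = b with max_k (x_{k+1} − x_k) < ρ, one has | Σ_{k=0}^{n−1} W(x_k)·(ω(x_{k+1}) − ω(x_k)) − 𝐼 | < ε. -/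
/-!
Young's argument, run for an arbitrary germ `Ξ` whose defect `Ξ s u - Ξ s t - Ξ t u` is at most
`C (u - s)^θ` with `θ > 1` (the sewing lemma); here `Ξ s t = W s (ω t - ω s)` and `θ = γ + δ`.
Among the `n + 1` double gaps `x (i+2) - x i` of a partition of `[x 0, x (n+2)]` one is at most
`2 L / (n + 1)`, `L` the length; deleting the middle point of that double gap changes the
Riemann sum by a defect, hence by at most `C (2 L / (n + 1))^θ`. Deleting points one at a time
gives Young's maximal inequality: the Riemann sum is within `C 2^θ ζ(θ) L^θ` of `Ξ (x 0) (x n)`.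
Applied on every interval of a partition of mesh `ρ`, it shows that any refinement changes the
Riemann sum by at most `C 2^θ ζ(θ) ρ^(θ-1) (b - a)`; comparing two partitions through a common
refinement, the Riemann sums are Cauchy as the mesh tends to zero.
-/

open Set

namespace Sewing

open Finset Filter Topology

noncomputable section

/-- A partition with `n` steps is encoded as a monotone `x : ℕ → ℝ`, of which only
`x 0, …, x n` matter. -/
def riemannSum (Ξ : ℝ → ℝ → ℝ) (x : ℕ → ℝ) (n : ℕ) : ℝ :=
  ∑ k ∈ range n, Ξ (x k) (x (k + 1))

def DefectBound (Ξ : ℝ → ℝ → ℝ) (a b C θ : ℝ) : Prop :=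
  ∀ s t u, a ≤ s → s ≤ t → t ≤ u → u ≤ b → |Ξ s u - Ξ s t - Ξ t u| ≤ C * (u - s) ^ θ

def sewingConstant (C θ : ℝ) : ℝ :=
  C * 2 ^ θ * ∑' k : ℕ, 1 / ((k : ℝ) + 1) ^ θ

variable {Ξ : ℝ → ℝ → ℝ} {a b C θ : ℝ}

lemma riemannSum_succ_eq_eraseIdx (Ξ : ℝ → ℝ → ℝ) (x : ℕ → ℝ) {i n : ℕ} (hin : i < n) :
    riemannSum Ξ x (n + 1) = riemannSum Ξ (fun k => if k ≤ i then x k else x (k + 1)) n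
      - (Ξ (x i) (x (i + 2)) - Ξ (x i) (x (i + 1)) - Ξ (x (i + 1)) (x (i + 2))) := by
  induction n, hin using Nat.le_induction with
  | base =>
    have hprefix : ∑ k ∈ range i, Ξ (if k ≤ i then x k else x (k + 1))
        (if k + 1 ≤ i then x (k + 1) else x (k + 1 + 1)) = ∑ k ∈ range i, Ξ (x k) (x (k + 1)) :=
      sum_congr rfl fun k hk => by
        rw [Finset.mem_range] at hk
        rw [if_pos hk.le, if_pos (Nat.succ_le_of_lt hk)]
    simp only [riemannSum, sum_range_succ, hprefix, le_refl, if_true,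
      if_neg (Nat.not_succ_le_self i)]
    ring
  | succ n hin ih =>
    rw [riemannSum, sum_range_succ, ← riemannSum, ih, riemannSum, riemannSum, sum_range_succ,
      if_neg (by omega), if_neg (by omega)]
    ring

lemma exists_add_two_sub_le_of_monotone {x : ℕ → ℝ} (hx : Monotone x) (n : ℕ) :
    ∃ i < n + 1, x (i + 2) - x i ≤ 2 * (x (n + 2) - x 0) / (n + 1) := by
  have htelescope : ∑ i ∈ range (n + 1), (x (i + 2) - x i)
      = (x (n + 2) - x 1) + (x (n + 1) - x 0) := by
    rw [← sum_range_sub (fun i => x (i + 1)), ← sum_range_sub x, ← sum_add_distrib]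
    exact sum_congr rfl fun i _ => by ring
  have hsum : ∑ i ∈ range (n + 1), (x (i + 2) - x i)
      ≤ ∑ _i ∈ range (n + 1), 2 * (x (n + 2) - x 0) / (n + 1) := by
    rw [htelescope, sum_const, card_range, nsmul_eq_mul, Nat.cast_add_one,
      mul_div_cancel₀ _ (by positivity)]
    linarith [hx (Nat.zero_le 1), hx (Nat.le_succ (n + 1))]
  obtain ⟨i, hi, hle⟩ := exists_le_of_sum_le nonempty_range_add_one hsum
  exact ⟨i, Finset.mem_range.mp hi, hle⟩

lemma abs_riemannSum_succ_sub_le (hΞ : DefectBound Ξ a b C θ) (hC : 0 ≤ C) (hθ : 0 < θ) (n : ℕ) :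
    ∀ x : ℕ → ℝ, Monotone x → a ≤ x 0 → x (n + 1) ≤ b →
      |riemannSum Ξ x (n + 1) - Ξ (x 0) (x (n + 1))|
        ≤ C * (2 * (x (n + 1) - x 0)) ^ θ * ∑ k ∈ range n, 1 / ((k : ℝ) + 1) ^ θ := by
  induction n with
  | zero => intro x _ _ _; simp [riemannSum]
  | succ n ih =>
    intro x hx ha hb
    obtain ⟨i, hin, hgap⟩ := exists_add_two_sub_le_of_monotone hx n
    set y : ℕ → ℝ := fun k => if k ≤ i then x k else x (k + 1) with hy
    have hy_mono : Monotone y := by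
      intro k l hkl
      simp only [hy]
      split_ifs <;> apply hx <;> omega
    have hy0 : y 0 = x 0 := if_pos (Nat.zero_le i)
    have hy_last : y (n + 1) = x (n + 2) := if_neg (by omega)
    have hdefect : |Ξ (x i) (x (i + 2)) - Ξ (x i) (x (i + 1)) - Ξ (x (i + 1)) (x (i + 2))|
        ≤ C * (2 * (x (n + 2) - x 0)) ^ θ * (1 / ((n : ℝ) + 1) ^ θ) := by
      have hgap_nonneg : 0 ≤ x (i + 2) - x i := sub_nonneg.mpr (hx (by omega))
      have hlength_nonneg : 0 ≤ 2 * (x (n + 2) - x 0) := by linarith [hx (Nat.zero_le (n + 2))]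
      calc _ ≤ C * (x (i + 2) - x i) ^ θ :=
            hΞ _ _ _ (ha.trans (hx (Nat.zero_le _))) (hx (Nat.le_succ i)) (hx (Nat.le_succ _))
              ((hx (by omega)).trans hb)
        _ ≤ C * (2 * (x (n + 2) - x 0) / (n + 1)) ^ θ := by gcongr
        _ = _ := by
          rw [Real.div_rpow hlength_nonneg (by positivity)]
          ring
    have hIH := ih y hy_mono (hy0 ▸ ha) (hy_last ▸ hb)
    rw [hy0, hy_last] at hIH
    rw [riemannSum_succ_eq_eraseIdx Ξ x (by omega : i < n + 1), sum_range_succ]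
    calc _ ≤ |riemannSum Ξ y (n + 1) - Ξ (x 0) (x (n + 2))|
          + |Ξ (x i) (x (i + 2)) - Ξ (x i) (x (i + 1)) - Ξ (x (i + 1)) (x (i + 2))| := by
          rw [← hy, sub_right_comm]
          exact abs_sub _ _
      _ ≤ _ := by
        rw [mul_add]
        exact add_le_add hIH hdefect

lemma summable_one_div_nat_add_one_rpow (hθ : 1 < θ) :
    Summable fun k : ℕ => 1 / ((k : ℝ) + 1) ^ θ := by
  have h := (summable_nat_add_iff 1).mpr (Real.summable_one_div_nat_rpow.mpr hθ)
  simpa only [Nat.cast_add_one] using h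

lemma sewingConstant_nonneg (hC : 0 ≤ C) : 0 ≤ sewingConstant C θ := by
  have : 0 ≤ ∑' k : ℕ, 1 / ((k : ℝ) + 1) ^ θ := tsum_nonneg fun k => by positivity
  unfold sewingConstant
  positivity

theorem abs_riemannSum_sub_le (hΞ : DefectBound Ξ a b C θ) (hC : 0 ≤ C) (hθ : 1 < θ)
    {x : ℕ → ℝ} (hx : Monotone x) {n : ℕ} (ha : a ≤ x 0) (hb : x n ≤ b) :
    |riemannSum Ξ x n - Ξ (x 0) (x n)| ≤ sewingConstant C θ * (x n - x 0) ^ θ := by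
  cases n with
  | zero =>
    have h := hΞ (x 0) (x 0) (x 0) ha le_rfl le_rfl hb
    simp only [sub_self, Real.zero_rpow (by linarith : θ ≠ 0), mul_zero] at h ⊢
    simpa [riemannSum] using h
  | succ n =>
    have hlength : 0 ≤ x (n + 1) - x 0 := sub_nonneg.mpr (hx (Nat.zero_le _))
    have hpartial : ∑ k ∈ range n, 1 / ((k : ℝ) + 1) ^ θ ≤ ∑' k : ℕ, 1 / ((k : ℝ) + 1) ^ θ :=
      (summable_one_div_nat_add_one_rpow hθ).sum_le_tsum _ fun k _ => by positivity
    calc _ ≤ C * (2 * (x (n + 1) - x 0)) ^ θ * ∑ k ∈ range n, 1 / ((k : ℝ) + 1) ^ θ :=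
          abs_riemannSum_succ_sub_le hΞ hC (by linarith) n x hx ha hb
      _ ≤ C * (2 * (x (n + 1) - x 0)) ^ θ * ∑' k : ℕ, 1 / ((k : ℝ) + 1) ^ θ := by gcongr
      _ = _ := by
        rw [sewingConstant, Real.mul_rpow zero_le_two hlength]
        ring

def Refines (z : ℕ → ℝ) (M : ℕ) (x : ℕ → ℝ) (n : ℕ) : Prop :=
  ∃ φ : ℕ → ℕ, Monotone φ ∧ φ 0 = 0 ∧ φ n = M ∧ ∀ k ≤ n, z (φ k) = x k

lemma sum_range_eq_sum_sum_Ico (f : ℕ → ℝ) {φ : ℕ → ℕ} (hφ : Monotone φ) (hφ0 : φ 0 = 0)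
    (n : ℕ) : ∑ i ∈ range (φ n), f i = ∑ k ∈ range n, ∑ i ∈ Ico (φ k) (φ (k + 1)), f i := by
  induction n with
  | zero => simp [hφ0]
  | succ n ih => rw [sum_range_succ, ← ih, sum_range_add_sum_Ico _ (hφ (Nat.le_succ n))]

lemma sum_rpow_sub_le {x : ℕ → ℝ} (hx : Monotone x) {n : ℕ} {ρ : ℝ}
    (hmesh : ∀ k < n, x (k + 1) - x k ≤ ρ) (hθ : 1 ≤ θ) :
    ∑ k ∈ range n, (x (k + 1) - x k) ^ θ ≤ ρ ^ (θ - 1) * (x n - x 0) := by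
  rw [← sum_range_sub x, mul_sum]
  refine sum_le_sum fun k hk => ?_
  have hstep : 0 ≤ x (k + 1) - x k := sub_nonneg.mpr (hx (Nat.le_succ k))
  calc (x (k + 1) - x k) ^ θ = (x (k + 1) - x k) ^ (θ - 1) * (x (k + 1) - x k) := by
        conv_lhs => rw [← sub_add_cancel θ 1]
        rw [Real.rpow_add' hstep (by linarith), Real.rpow_one]
    _ ≤ ρ ^ (θ - 1) * (x (k + 1) - x k) := by
        gcongr
        exact hmesh k (Finset.mem_range.mp hk)

theorem abs_riemannSum_sub_riemannSum_le_of_refines (hΞ : DefectBound Ξ a b C θ) (hC : 0 ≤ C)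
    (hθ : 1 < θ) {z x : ℕ → ℝ} {M n : ℕ} (hz : Monotone z) (hzx : Refines z M x n)
    (ha : a ≤ x 0) (hb : x n ≤ b) :
    |riemannSum Ξ z M - riemannSum Ξ x n|
      ≤ sewingConstant C θ * ∑ k ∈ range n, (x (k + 1) - x k) ^ θ := by
  obtain ⟨φ, hφ, hφ0, hφn, hzφ⟩ := hzx
  replace ha : a ≤ z 0 := by rwa [← hφ0, hzφ 0 (Nat.zero_le n)]
  replace hb : z M ≤ b := by rwa [← hφn, hzφ n le_rfl]
  have hblock : ∀ k < n, |∑ i ∈ Ico (φ k) (φ (k + 1)), Ξ (z i) (z (i + 1)) - Ξ (x k) (x (k + 1))|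
      ≤ sewingConstant C θ * (x (k + 1) - x k) ^ θ := by
    intro k hk
    have hle : φ k ≤ φ (k + 1) := hφ (Nat.le_succ k)
    have hlast : φ k + (φ (k + 1) - φ k) = φ (k + 1) := Nat.add_sub_cancel' hle
    have hb' : z (φ (k + 1)) ≤ b := (hz (hφn ▸ hφ hk : φ (k + 1) ≤ M)).trans hb
    have hbound := abs_riemannSum_sub_le hΞ hC hθ (x := fun j => z (φ k + j))
      (fun i j hij => hz (by omega)) (ha.trans (hz (Nat.zero_le _))) (by rwa [hlast])
    simp only [add_zero, hlast, hzφ k hk.le, hzφ (k + 1) hk] at hbound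
    rwa [sum_Ico_eq_sum_range]
  rw [riemannSum, ← hφn, sum_range_eq_sum_sum_Ico _ hφ hφ0, riemannSum, ← sum_sub_distrib]
  calc _ ≤ ∑ k ∈ range n,
        |∑ i ∈ Ico (φ k) (φ (k + 1)), Ξ (z i) (z (i + 1)) - Ξ (x k) (x (k + 1))| :=
        abs_sum_le_sum_abs _ _
    _ ≤ _ := by
      rw [mul_sum]
      exact sum_le_sum fun k hk => hblock k (Finset.mem_range.mp hk)

lemma coe_orderIsoOfFin_symm_eq_card_filter_lt {α : Type*} [LinearOrder α] {s : Finset α} {k : ℕ}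
    (h : #s = k) {t : α} (ht : t ∈ s) :
    ((s.orderIsoOfFin h).symm ⟨t, ht⟩ : ℕ) = #{u ∈ s | u < t} := by
  set i := (s.orderIsoOfFin h).symm ⟨t, ht⟩
  have hi : s.orderEmbOfFin h i = t := by
    simp [i, ← coe_orderIsoOfFin_apply]
  have hfilter : {u ∈ s | u < t} = (Finset.Iio i).map (s.orderEmbOfFin h).toEmbedding := by
    ext u
    simp only [mem_filter, Finset.mem_map, Finset.mem_Iio, RelEmbedding.coe_toEmbedding]
    constructor
    · rintro ⟨hu, hut⟩
      obtain ⟨j, rfl⟩ : u ∈ Set.range (s.orderEmbOfFin h) := by simpa using hu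
      exact ⟨j, (s.orderEmbOfFin h).lt_iff_lt.mp (hi ▸ hut), rfl⟩
    · rintro ⟨j, hj, rfl⟩
      exact ⟨orderEmbOfFin_mem s h j, hi ▸ (s.orderEmbOfFin h).lt_iff_lt.mpr hj⟩
  rw [hfilter, card_map, Fin.card_Iio]

lemma refines_orderEmbOfFin {s : Finset ℝ} {M : ℕ} (hM : #s = M + 1) {x : ℕ → ℝ} {n : ℕ}
    (hx : Monotone x) (hxs : ∀ k ≤ n, x k ∈ s) (h0 : ∀ t ∈ s, x 0 ≤ t) (hn : ∀ t ∈ s, t ≤ x n) :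
    Refines (fun j => s.orderEmbOfFin hM (Fin.clamp j M)) M x n := by
  set φ : ℕ → ℕ := fun k => #{t ∈ s | t < x k}
  have hφ : Monotone φ := fun k l hkl =>
    card_le_card (monotone_filter_right s (fun t _ (htk : t < x k) => htk.trans_le (hx hkl)))
  have hφn : φ n = M := by
    have : {t ∈ s | t < x n} = s.erase (x n) := by
      ext t
      simp only [mem_filter, mem_erase]
      constructor
      · rintro ⟨ht, htn⟩
        exact ⟨htn.ne, ht⟩
      · rintro ⟨htn, ht⟩
        exact ⟨ht, lt_of_le_of_ne (hn t ht) htn⟩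
    simp only [φ, this, card_erase_of_mem (hxs n le_rfl), hM, Nat.add_sub_cancel]
  refine ⟨φ, hφ, ?_, hφn, fun k hk => ?_⟩
  · simp only [φ, card_eq_zero, filter_eq_empty_iff, not_lt]
    exact h0
  · have hclamp : Fin.clamp (φ k) M = (s.orderIsoOfFin hM).symm ⟨x k, hxs k hk⟩ := by
      ext
      rw [coe_orderIsoOfFin_symm_eq_card_filter_lt]
      exact min_eq_left (hφn ▸ hφ hk)
    simp only [hclamp, ← coe_orderIsoOfFin_apply, OrderIso.apply_symm_apply]

lemma exists_common_refinement {x u : ℕ → ℝ} {n m : ℕ} (hx : Monotone x) (hu : Monotone u)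
    (h0 : x 0 = u 0) (hn : x n = u m) :
    ∃ (z : ℕ → ℝ) (M : ℕ), Monotone z ∧ Refines z M x n ∧ Refines z M u m := by
  set s := (range (n + 1)).image x ∪ (range (m + 1)).image u
  have hx_mem : ∀ k ≤ n, x k ∈ s := fun k hk =>
    mem_union_left _ (mem_image_of_mem x (Finset.mem_range.mpr (Nat.lt_succ_of_le hk)))
  have hu_mem : ∀ k ≤ m, u k ∈ s := fun k hk =>
    mem_union_right _ (mem_image_of_mem u (Finset.mem_range.mpr (Nat.lt_succ_of_le hk)))
  have hbounds : ∀ t ∈ s, x 0 ≤ t ∧ t ≤ x n := by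
    intro t ht
    rcases mem_union.mp ht with ht | ht <;> obtain ⟨k, hk, rfl⟩ := mem_image.mp ht <;>
      rw [Finset.mem_range] at hk
    · exact ⟨hx (Nat.zero_le k), hx (by omega)⟩
    · exact ⟨h0 ▸ hu (Nat.zero_le k), hn ▸ hu (by omega)⟩
  obtain ⟨M, hM⟩ : ∃ M, #s = M + 1 :=
    Nat.exists_eq_add_one.mpr (card_pos.mpr ⟨x 0, hx_mem 0 (Nat.zero_le n)⟩)
  refine ⟨fun j => s.orderEmbOfFin hM (Fin.clamp j M), M,
    (s.orderEmbOfFin hM).monotone.comp Fin.clamp_monotone,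
    refines_orderEmbOfFin hM hx hx_mem (fun t ht => (hbounds t ht).1)
      (fun t ht => (hbounds t ht).2),
    refines_orderEmbOfFin hM hu hu_mem (fun t ht => h0 ▸ (hbounds t ht).1)
      (fun t ht => hn ▸ (hbounds t ht).2)⟩

theorem abs_riemannSum_sub_riemannSum_le (hΞ : DefectBound Ξ a b C θ) (hC : 0 ≤ C) (hθ : 1 < θ)
    {x u : ℕ → ℝ} {n m : ℕ} (hx : Monotone x) (hu : Monotone u) (hx0 : x 0 = a) (hxn : x n = b)
    (hu0 : u 0 = a) (hum : u m = b) {ρ σ : ℝ} (hxρ : ∀ k < n, x (k + 1) - x k ≤ ρ)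
    (huσ : ∀ k < m, u (k + 1) - u k ≤ σ) :
    |riemannSum Ξ x n - riemannSum Ξ u m|
      ≤ sewingConstant C θ * (ρ ^ (θ - 1) + σ ^ (θ - 1)) * (b - a) := by
  obtain ⟨z, M, hz, hzx, hzu⟩ := exists_common_refinement hx hu (hx0.trans hu0.symm)
    (hxn.trans hum.symm)
  have hK := sewingConstant_nonneg (θ := θ) hC
  have hzx_bound := abs_riemannSum_sub_riemannSum_le_of_refines hΞ hC hθ hz hzx hx0.ge hxn.le
  have hzu_bound := abs_riemannSum_sub_riemannSum_le_of_refines hΞ hC hθ hz hzu hu0.ge hum.le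
  have hx_mesh := sum_rpow_sub_le hx hxρ hθ.le
  have hu_mesh := sum_rpow_sub_le hu huσ hθ.le
  rw [hx0, hxn] at hx_mesh
  rw [hu0, hum] at hu_mesh
  calc _ ≤ |riemannSum Ξ z M - riemannSum Ξ x n| + |riemannSum Ξ z M - riemannSum Ξ u m| :=
        (abs_sub_le _ (riemannSum Ξ z M) _).trans_eq (by rw [abs_sub_comm])
    _ ≤ sewingConstant C θ * (ρ ^ (θ - 1) * (b - a))
          + sewingConstant C θ * (σ ^ (θ - 1) * (b - a)) := by
        gcongr
        · exact hzx_bound.trans (by gcongr)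
        · exact hzu_bound.trans (by gcongr)
    _ = _ := by ring

def uniformPartition (a b : ℝ) (N k : ℕ) : ℝ :=
  a + (b - a) / (N + 1) * k

lemma monotone_uniformPartition (hab : a ≤ b) (N : ℕ) : Monotone (uniformPartition a b N) :=
  fun k l hkl => by
    unfold uniformPartition
    gcongr

lemma uniformPartition_succ_sub (a b : ℝ) (N k : ℕ) :
    uniformPartition a b N (k + 1) - uniformPartition a b N k = (b - a) / (N + 1) := by
  simp only [uniformPartition, Nat.cast_add_one]
  ring

lemma uniformPartition_last (a b : ℝ) (N : ℕ) : uniformPartition a b N (N + 1) = b := by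
  simp only [uniformPartition, Nat.cast_add_one]
  field_simp
  ring

lemma tendsto_div_nat_add_one_rpow (c : ℝ) (hθ : 1 < θ) :
    Tendsto (fun N : ℕ => (c / (N + 1)) ^ (θ - 1)) atTop (𝓝 0) := by
  have hmesh : Tendsto (fun N : ℕ => c / ((N : ℝ) + 1)) atTop (𝓝 0) := by
    simpa only [Function.comp_def, Nat.cast_add_one] using
      (tendsto_const_div_atTop_nhds_zero_nat c).comp (tendsto_add_atTop_nat 1)
  have hrpow := (Real.continuousAt_rpow_const 0 (θ - 1) (Or.inr (by linarith))).tendsto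
  rw [Real.zero_rpow (by linarith)] at hrpow
  exact hrpow.comp hmesh

theorem exists_abs_riemannSum_sub_le (hΞ : DefectBound Ξ a b C θ) (hC : 0 ≤ C) (hθ : 1 < θ)
    (hab : a ≤ b) :
    ∃ L, ∀ (ρ : ℝ) (n : ℕ) (x : ℕ → ℝ), Monotone x → x 0 = a → x n = b →
      (∀ k < n, x (k + 1) - x k ≤ ρ) →
        |riemannSum Ξ x n - L| ≤ sewingConstant C θ * ρ ^ (θ - 1) * (b - a) := by
  set h : ℕ → ℝ := fun N => (b - a) / (N + 1)
  set S : ℕ → ℝ := fun N => riemannSum Ξ (uniformPartition a b N) (N + 1)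
  have hS_bound : ∀ (ρ : ℝ) (n : ℕ) (x : ℕ → ℝ), Monotone x → x 0 = a → x n = b →
      (∀ k < n, x (k + 1) - x k ≤ ρ) → ∀ (σ : ℝ) (N : ℕ), h N ≤ σ →
        |riemannSum Ξ x n - S N| ≤ sewingConstant C θ * (ρ ^ (θ - 1) + σ ^ (θ - 1)) * (b - a) :=
    fun ρ n x hx hx0 hxn hxρ σ N hσ =>
      abs_riemannSum_sub_riemannSum_le hΞ hC hθ hx (monotone_uniformPartition hab N) hx0 hxn
        (by simp [uniformPartition]) (uniformPartition_last a b N) hxρ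
        (fun k _ => (uniformPartition_succ_sub a b N k).trans_le hσ)
  have hh := tendsto_div_nat_add_one_rpow (b - a) hθ
  have hh_anti : Antitone h := fun N M hNM =>
    div_le_div_of_nonneg_left (sub_nonneg.mpr hab) (by positivity) (by gcongr)
  have hS_cauchy : CauchySeq S := by
    refine cauchySeq_of_le_tendsto_0
      (fun N => sewingConstant C θ * (h N ^ (θ - 1) + h N ^ (θ - 1)) * (b - a)) ?_ ?_
    · intro p q N hp hq
      have hmesh : ∀ k < p + 1, uniformPartition a b p (k + 1) - uniformPartition a b p k ≤ h N :=
        fun k _ => (uniformPartition_succ_sub a b p k).trans_le (hh_anti hp)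
      exact hS_bound (h N) (p + 1) _ (monotone_uniformPartition hab p)
        (by simp [uniformPartition]) (uniformPartition_last a b p) hmesh (h N) q (hh_anti hq)
    · simpa using ((hh.add hh).const_mul (sewingConstant C θ)).mul_const (b - a)
  obtain ⟨L, hL⟩ := cauchySeq_tendsto_of_complete hS_cauchy
  refine ⟨L, fun ρ n x hx hx0 hxn hxρ => ?_⟩
  have hlimit := ((hh.const_add (ρ ^ (θ - 1))).const_mul (sewingConstant C θ)).mul_const (b - a)
  rw [add_zero] at hlimit
  exact le_of_tendsto_of_tendsto' (tendsto_const_nhds.sub hL).abs hlimit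
    fun N => hS_bound ρ n x hx hx0 hxn hxρ (h N) N le_rfl

theorem exists_abs_riemannSum_sub_lt (hΞ : DefectBound Ξ a b C θ) (hC : 0 ≤ C) (hθ : 1 < θ)
    (hab : a ≤ b) :
    ∃ L, ∀ ε > (0 : ℝ), ∃ ρ > (0 : ℝ), ∀ (n : ℕ) (x : ℕ → ℝ), Monotone x → x 0 = a → x n = b →
      (∀ k < n, x (k + 1) - x k < ρ) → |riemannSum Ξ x n - L| < ε := by
  obtain ⟨L, hL⟩ := exists_abs_riemannSum_sub_le hΞ hC hθ hab
  refine ⟨L, fun ε hε => ?_⟩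
  have hsmall :=
    ((tendsto_div_nat_add_one_rpow 1 hθ).const_mul (sewingConstant C θ)).mul_const (b - a)
  rw [mul_zero, zero_mul] at hsmall
  obtain ⟨N, hN⟩ := (hsmall.eventually (gt_mem_nhds hε)).exists
  exact ⟨1 / (N + 1), by positivity, fun n x hx hx0 hxn hxρ =>
    (hL _ n x hx hx0 hxn fun k hk => (hxρ k hk).le).trans_lt hN⟩

lemma riemannSum_comp_clamp (Ξ : ℝ → ℝ → ℝ) {n : ℕ} (x : Fin (n + 1) → ℝ) :
    riemannSum Ξ (fun k => x (Fin.clamp k n)) n = ∑ k : Fin n, Ξ (x k.castSucc) (x k.succ) := by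
  rw [riemannSum, ← Fin.sum_univ_eq_sum_range]
  refine sum_congr rfl fun k _ => ?_
  congr 2 <;> ext <;> simp [Fin.clamp, k.isLt.le, Nat.succ_le_of_lt k.isLt]

end

end Sewing

open Sewing

lemma abs_sub_le_of_holder {f : ℝ → ℝ} {a b c α : ℝ} (hα : 0 ≤ α)
    (hf : ∀ x ∈ Icc a b, ∀ y ∈ Icc a b, |f x - f y| ≤ c * |x - y| ^ α) {x y d : ℝ}
    (hx : x ∈ Icc a b) (hy : y ∈ Icc a b) (hd : |x - y| ≤ d) :
    |f x - f y| ≤ |c| * d ^ α :=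
  (hf x hx y hy).trans <| mul_le_mul (le_abs_self c) (Real.rpow_le_rpow (abs_nonneg _) hd hα)
    (by positivity) (abs_nonneg c)

lemma defectBound_young {ω W : ℝ → ℝ} {a b γ δ Cω CW : ℝ} (hγ : 0 ≤ γ) (hδ : 0 ≤ δ)
    (hω : ∀ x ∈ Icc a b, ∀ y ∈ Icc a b, |ω x - ω y| ≤ Cω * |x - y| ^ γ)
    (hW : ∀ x ∈ Icc a b, ∀ y ∈ Icc a b, |W x - W y| ≤ CW * |x - y| ^ δ) :
    DefectBound (fun s t => W s * (ω t - ω s)) a b (|CW| * |Cω|) (γ + δ) := by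
  intro s t u hs hst htu hu
  have hW' : |W s - W t| ≤ |CW| * (u - s) ^ δ :=
    abs_sub_le_of_holder hδ hW ⟨hs, by linarith⟩ ⟨by linarith, by linarith⟩
      (by rw [abs_sub_comm, abs_of_nonneg (by linarith)]; linarith)
  have hω' : |ω u - ω t| ≤ |Cω| * (u - s) ^ γ :=
    abs_sub_le_of_holder hγ hω ⟨by linarith, hu⟩ ⟨by linarith, by linarith⟩
      (by rw [abs_of_nonneg (by linarith)]; linarith)
  calc |W s * (ω u - ω s) - W s * (ω t - ω s) - W t * (ω u - ω t)|
      = |W s - W t| * |ω u - ω t| := by rw [← abs_mul]; ring_nf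
    _ ≤ |CW| * (u - s) ^ δ * (|Cω| * (u - s) ^ γ) :=
        mul_le_mul hW' hω' (abs_nonneg _)
          (mul_nonneg (abs_nonneg _) (Real.rpow_nonneg (by linarith) _))
    _ = |CW| * |Cω| * (u - s) ^ (γ + δ) := by
        rw [Real.rpow_add_of_nonneg (by linarith) hγ hδ]
        ring

theorem young_integral_exists_general (a b : ℝ) (hab : a < b) (γ δ : ℝ)
    (hγ0 : 0 < γ) (hδ0 : 0 < δ) (hsum : 1 < γ + δ)
    (ω W : ℝ → ℝ) (Cω CW : ℝ)
    (hω : ∀ x ∈ Icc a b, ∀ y ∈ Icc a b, |ω x - ω y| ≤ Cω * |x - y| ^ γ)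
    (hW : ∀ x ∈ Icc a b, ∀ y ∈ Icc a b, |W x - W y| ≤ CW * |x - y| ^ δ) :
    ∃ L : ℝ, ∀ ε > (0 : ℝ), ∃ ρ > (0 : ℝ), ∀ (n : ℕ) (x : Fin (n + 1) → ℝ),
      x 0 = a → x (Fin.last n) = b →
      (∀ k : Fin n, x k.castSucc < x k.succ) →
      (∀ k : Fin n, x k.succ - x k.castSucc < ρ) →
      |(∑ k : Fin n, W (x k.castSucc) * (ω (x k.succ) - ω (x k.castSucc))) - L| < ε := by
  obtain ⟨L, hL⟩ := exists_abs_riemannSum_sub_lt (defectBound_young hγ0.le hδ0.le hω hW)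
    (by positivity) hsum hab.le
  refine ⟨L, fun ε hε => ?_⟩
  obtain ⟨ρ, hρ, hconv⟩ := hL ε hε
  refine ⟨ρ, hρ, fun n x hx0 hxn hx_lt hmesh => ?_⟩
  have hx_mono : Monotone x := (Fin.strictMono_iff_lt_succ.mpr hx_lt).monotone
  rw [← riemannSum_comp_clamp (fun s t => W s * (ω t - ω s)) x]
  refine hconv n _ (hx_mono.comp Fin.clamp_monotone) (by simpa [Fin.clamp] using hx0)
    (by rwa [Fin.clamp_eq_last n n le_rfl]) fun k hk => ?_
  simpa [Fin.clamp, hk.le, Nat.succ_le_of_lt hk] using hmesh ⟨k, hk⟩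

/-- Pathwise Young integral: if `ω` is `γ`-Hölder and `W` is `δ`-Hölder on `[a,b]` with
`γ + δ > 1`, then the Riemann sums `Σ_k W(x_k)(ω(x_{k+1}) − ω(x_k))` converge to a limit
as the mesh of the partition `a = x_0 < … < x_n = b` tends to zero. -/
theorem young_integral_exists (a b : ℝ) (hab : a < b) (γ δ : ℝ)
    (hγ0 : 0 < γ) (hγ1 : γ ≤ 1) (hδ0 : 0 < δ) (hδ1 : δ ≤ 1) (hsum : 1 < γ + δ)
    (ω W : ℝ → ℝ) (Cω CW : ℝ)
    (hω : ∀ x ∈ Icc a b, ∀ y ∈ Icc a b, |ω x - ω y| ≤ Cω * |x - y| ^ γ)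
    (hW : ∀ x ∈ Icc a b, ∀ y ∈ Icc a b, |W x - W y| ≤ CW * |x - y| ^ δ) :
    ∃ L : ℝ, ∀ ε > (0 : ℝ), ∃ ρ > (0 : ℝ), ∀ (n : ℕ) (x : Fin (n + 1) → ℝ),
      x 0 = a → x (Fin.last n) = b →
      (∀ k : Fin n, x k.castSucc < x k.succ) →
      (∀ k : Fin n, x k.succ - x k.castSucc < ρ) →
      |(∑ k : Fin n, W (x k.castSucc) * (ω (x k.succ) - ω (x k.castSucc))) - L| < ε :=
  young_integral_exists_general a b hab γ δ hγ0 hδ0 hsum ω W Cω CW hω hW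
end

section
/- (Joint continuity of the pathwise integral.) Let a < b be reals and γ, δ ∈ (0,1] with γ + δ > 1. Let ω_m, ω : [a,b] → ℝ be γ-Hölder and W_m, W : [a,b] → ℝ be δ-Hölder (m ∈ ℕ), with [ω_m − ω]_γ → 0, ‖W_m − W‖_∞ → 0, and [W_m − W]_δ → 0 as m → ∞. Suppose 𝐼_m ∈ ℝ is, for each m, the limit of the Riemann sums Σ_k W_m(x_k)(ω_m(x_{k+1}) − ω_m(x_k)) as the partition mesh tends to zero, and 𝐼 ∈ ℝ is the corresponding limit for (W, ω). Then 𝐼_m → 𝐼 as m → ∞. -/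
open Set Filter

/-- `f` is `r`-Hölder on `[a,b]` with seminorm bound `C`. -/
def HolderBoundOn (C r a b : ℝ) (f : ℝ → ℝ) : Prop :=
  ∀ x ∈ Icc a b, ∀ y ∈ Icc a b, |f x - f y| ≤ C * |x - y| ^ r

/-- `L` is the limit of the Riemann–Stieltjes sums `Σ_k W(x_k)(ω(x_{k+1}) − ω(x_k))` over
partitions `a = x_0 < … < x_n = b` as the mesh tends to zero. -/
def IsRiemannStieltjesLimit (a b : ℝ) (W ω : ℝ → ℝ) (L : ℝ) : Prop :=
  ∀ ε > (0 : ℝ), ∃ ρ > (0 : ℝ), ∀ (n : ℕ) (x : Fin (n + 1) → ℝ),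
    x 0 = a → x (Fin.last n) = b →
    (∀ k : Fin n, x k.castSucc < x k.succ) →
    (∀ k : Fin n, x k.succ - x k.castSucc < ρ) →
    |(∑ k : Fin n, W (x k.castSucc) * (ω (x k.succ) - ω (x k.castSucc))) - L| < ε

/-!
Along the uniform partitions of `[a,b]`, halving a mesh `h` changes the Riemann–Stieltjes sum of
`f dg` by products of increments over adjacent half-cells, `(b-a)/h` terms of size at most
`[f]_δ [g]_γ (h/2)^(γ+δ)`. As `γ + δ > 1`, these corrections form a geometric series along the
dyadic partitions, so every dyadic sum lies within `C [f]_δ [g]_γ (b-a)^(γ+δ)` of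
`f(a) (g(b) - g(a))` (Young–Loève). The sums are bilinear in `(f, g)`: the dyadic sums for
`(W_m, ω_m)` and `(W, ω)` differ by those of `(W_m - W) dω_m` and `W d(ω_m - ω)`, which are
bounded, uniformly in the partition, by quantities tending to zero; the dyadic sums converge to
`L_m` and `L₀`, so the same bound holds for `|L_m - L₀|`.
-/

open Topology

namespace HolderBoundOn

variable {C C₁ C₂ r a b : ℝ} {f g : ℝ → ℝ}

theorem nonneg (hab : a < b) (h : HolderBoundOn C r a b f) : 0 ≤ C := by
  have hpos : 0 < |a - b| ^ r := Real.rpow_pos_of_pos (abs_pos.mpr (sub_ne_zero.mpr hab.ne)) r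
  have := (abs_nonneg _).trans (h a (left_mem_Icc.mpr hab.le) b (right_mem_Icc.mpr hab.le))
  exact nonneg_of_mul_nonneg_left this hpos

theorem add (hf : HolderBoundOn C₁ r a b f) (hg : HolderBoundOn C₂ r a b g) :
    HolderBoundOn (C₁ + C₂) r a b (fun x => f x + g x) := by
  intro x hx y hy
  calc |f x + g x - (f y + g y)| ≤ |f x - f y| + |g x - g y| := by
        rw [add_sub_add_comm]; exact abs_add_le _ _
    _ ≤ C₁ * |x - y| ^ r + C₂ * |x - y| ^ r := add_le_add (hf x hx y hy) (hg x hx y hy)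
    _ = (C₁ + C₂) * |x - y| ^ r := by ring

end HolderBoundOn

noncomputable def uniformNode (a b : ℝ) (n i : ℕ) : ℝ := a + i * (b - a) / n

noncomputable def uniformRSSum (a b : ℝ) (f g : ℝ → ℝ) (n : ℕ) : ℝ :=
  ∑ i ∈ Finset.range n,
    f (uniformNode a b n i) * (g (uniformNode a b n (i + 1)) - g (uniformNode a b n i))

section UniformPartition

variable {a b : ℝ} {n i : ℕ}

theorem uniformNode_succ_sub : uniformNode a b n (i + 1) - uniformNode a b n i = (b - a) / n := by
  unfold uniformNode; push_cast; ring

theorem uniformNode_mem_Icc (hab : a ≤ b) (hi : i ≤ n) : uniformNode a b n i ∈ Icc a b := by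
  have hfrac : 0 ≤ (i : ℝ) / n ∧ (i : ℝ) / n ≤ 1 :=
    ⟨by positivity, div_le_one_of_le₀ (by exact_mod_cast hi) (by positivity)⟩
  have : uniformNode a b n i = a + (i : ℝ) / n * (b - a) := by unfold uniformNode; ring
  rw [this]
  constructor <;> nlinarith

theorem uniformNode_two_mul (hn : n ≠ 0) :
    uniformNode a b (2 * n) (2 * i) = uniformNode a b n i := by
  unfold uniformNode; push_cast; field_simp

end UniformPartition

theorem sum_range_two_mul {M : Type*} [AddCommMonoid M] (f : ℕ → M) (n : ℕ) :
    ∑ i ∈ Finset.range (2 * n), f i =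
      ∑ i ∈ Finset.range n, (f (2 * i) + f (2 * i + 1)) := by
  induction n with
  | zero => simp
  | succ n ih =>
    rw [show 2 * (n + 1) = 2 * n + 1 + 1 by ring, Finset.sum_range_succ, Finset.sum_range_succ,
      Finset.sum_range_succ, ih, add_assoc]

section UniformRSSum

variable {a b γ δ Cf Cg : ℝ} {f g : ℝ → ℝ} {n : ℕ}

theorem abs_sub_uniformNode_le {C r : ℝ} (hab : a ≤ b) (hf : HolderBoundOn C r a b f) {i : ℕ}
    (hi : i + 1 ≤ n) :
    |f (uniformNode a b n (i + 1)) - f (uniformNode a b n i)| ≤ C * ((b - a) / n) ^ r := by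
  have h := hf _ (uniformNode_mem_Icc hab hi) (uniformNode a b n i)
    (uniformNode_mem_Icc hab (by omega))
  rwa [uniformNode_succ_sub, abs_of_nonneg (div_nonneg (sub_nonneg.mpr hab) n.cast_nonneg)] at h

theorem uniformRSSum_sub_uniformRSSum (f₁ g₁ f₂ g₂ : ℝ → ℝ) (n : ℕ) :
    uniformRSSum a b f₁ g₁ n - uniformRSSum a b f₂ g₂ n =
      uniformRSSum a b (fun x => f₁ x - f₂ x) g₁ n +
        uniformRSSum a b f₂ (fun x => g₁ x - g₂ x) n := by
  simp only [uniformRSSum, ← Finset.sum_sub_distrib, ← Finset.sum_add_distrib]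
  exact Finset.sum_congr rfl fun _ _ => by ring

theorem uniformRSSum_two_mul_sub (hn : n ≠ 0) :
    uniformRSSum a b f g (2 * n) - uniformRSSum a b f g n =
      ∑ i ∈ Finset.range n,
        (f (uniformNode a b (2 * n) (2 * i + 1)) - f (uniformNode a b (2 * n) (2 * i))) *
          (g (uniformNode a b (2 * n) (2 * i + 1 + 1)) -
            g (uniformNode a b (2 * n) (2 * i + 1))) := by
  rw [uniformRSSum, sum_range_two_mul, uniformRSSum, ← Finset.sum_sub_distrib]
  refine Finset.sum_congr rfl fun i _ => ?_
  rw [show 2 * i + 1 + 1 = 2 * (i + 1) by ring, uniformNode_two_mul hn, uniformNode_two_mul hn]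
  ring

theorem abs_uniformRSSum_two_mul_sub_le (hab : a < b) (hs : 0 ≤ γ + δ)
    (hf : HolderBoundOn Cf δ a b f) (hg : HolderBoundOn Cg γ a b g) (hn : n ≠ 0) :
    |uniformRSSum a b f g (2 * n) - uniformRSSum a b f g n| ≤
      Cf * Cg * (b - a) ^ (γ + δ) * (n : ℝ) ^ (1 - (γ + δ)) := by
  have hn' : (0 : ℝ) < n := by positivity
  have hba : 0 < b - a := sub_pos.mpr hab
  set h := (b - a) / ((2 * n : ℕ) : ℝ) with h_def
  have hh : 0 < h := by positivity
  have hterm : ∀ i ∈ Finset.range n,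
      |(f (uniformNode a b (2 * n) (2 * i + 1)) - f (uniformNode a b (2 * n) (2 * i))) *
        (g (uniformNode a b (2 * n) (2 * i + 1 + 1)) -
          g (uniformNode a b (2 * n) (2 * i + 1)))| ≤ Cf * Cg * h ^ (γ + δ) := by
    intro i hi
    have hi := Finset.mem_range.mp hi
    have hF := abs_sub_uniformNode_le hab.le hf (n := 2 * n) (i := 2 * i) (by omega)
    have hG := abs_sub_uniformNode_le hab.le hg (n := 2 * n) (i := 2 * i + 1) (by omega)
    rw [abs_mul, Real.rpow_add hh]
    calc _ ≤ Cf * h ^ δ * (Cg * h ^ γ) :=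
          mul_le_mul hF hG (abs_nonneg _) ((abs_nonneg _).trans hF)
      _ = Cf * Cg * (h ^ γ * h ^ δ) := by ring
  have hscale : n * h ^ (γ + δ) ≤ (b - a) ^ (γ + δ) * (n : ℝ) ^ (1 - (γ + δ)) := by
    have hle : (n : ℝ) ^ (γ + δ) ≤ ((2 * n : ℕ) : ℝ) ^ (γ + δ) :=
      Real.rpow_le_rpow hn'.le (by push_cast; linarith) hs
    rw [h_def, Real.div_rpow hba.le (by positivity), Real.rpow_sub hn', Real.rpow_one,
      mul_div_assoc', mul_comm, mul_div_assoc]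
    gcongr
  rw [uniformRSSum_two_mul_sub hn]
  calc _ ≤ ∑ i ∈ Finset.range n, Cf * Cg * h ^ (γ + δ) :=
        (Finset.abs_sum_le_sum_abs _ _).trans (Finset.sum_le_sum hterm)
    _ = Cf * Cg * (n * h ^ (γ + δ)) := by
      rw [Finset.sum_const, Finset.card_range, nsmul_eq_mul]; ring
    _ ≤ _ := by
      rw [mul_assoc _ ((b - a) ^ (γ + δ))]
      exact mul_le_mul_of_nonneg_left hscale (mul_nonneg (hf.nonneg hab) (hg.nonneg hab))

theorem uniformRSSum_one : uniformRSSum a b f g 1 = f a * (g b - g a) := by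
  simp [uniformRSSum, uniformNode]

theorem abs_uniformRSSum_two_pow_sub_le (hab : a < b) (hs : 1 < γ + δ)
    (hf : HolderBoundOn Cf δ a b f) (hg : HolderBoundOn Cg γ a b g) (K : ℕ) :
    |uniformRSSum a b f g (2 ^ K) - f a * (g b - g a)| ≤
      Cf * Cg * (b - a) ^ (γ + δ) * (1 - (2 : ℝ) ^ (1 - (γ + δ)))⁻¹ := by
  set r : ℝ := (2 : ℝ) ^ (1 - (γ + δ))
  have hr1 : r < 1 := Real.rpow_lt_one_of_one_lt_of_neg one_lt_two (by linarith)
  have hC : 0 ≤ Cf * Cg * (b - a) ^ (γ + δ) :=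
    mul_nonneg (mul_nonneg (hf.nonneg hab) (hg.nonneg hab))
      (Real.rpow_nonneg (sub_pos.mpr hab).le _)
  have hstep : ∀ k ∈ Finset.range K,
      |uniformRSSum a b f g (2 ^ (k + 1)) - uniformRSSum a b f g (2 ^ k)| ≤
        Cf * Cg * (b - a) ^ (γ + δ) * r ^ k := by
    intro k _
    have h := abs_uniformRSSum_two_mul_sub_le hab (by linarith) hf hg (pow_ne_zero k two_ne_zero)
    rwa [← pow_succ', Nat.cast_pow, Nat.cast_ofNat, ← Real.rpow_pow_comm zero_le_two] at h
  rw [← uniformRSSum_one, ← pow_zero 2,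
    ← Finset.sum_range_sub (fun k => uniformRSSum a b f g (2 ^ k))]
  calc _ ≤ ∑ k ∈ Finset.range K, Cf * Cg * (b - a) ^ (γ + δ) * r ^ k :=
        (Finset.abs_sum_le_sum_abs _ _).trans (Finset.sum_le_sum hstep)
    _ = Cf * Cg * (b - a) ^ (γ + δ) * ∑ k ∈ Finset.range K, r ^ k := by rw [Finset.mul_sum]
    _ ≤ _ := by
      refine mul_le_mul_of_nonneg_left ?_ hC
      have := geom_sum_Ico_le_of_lt_one (m := 0) (n := K) (by positivity : 0 ≤ r) hr1
      rwa [← Finset.range_eq_Ico, pow_zero, one_div] at this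

theorem abs_uniformRSSum_two_pow_le (hab : a < b) (hs : 1 < γ + δ)
    (hf : HolderBoundOn Cf δ a b f) (hg : HolderBoundOn Cg γ a b g) (K : ℕ) :
    |uniformRSSum a b f g (2 ^ K)| ≤
      (|f a| * (b - a) ^ γ + (1 - (2 : ℝ) ^ (1 - (γ + δ)))⁻¹ * Cf * (b - a) ^ (γ + δ)) *
        Cg := by
  have hfirst : |f a * (g b - g a)| ≤ |f a| * (Cg * (b - a) ^ γ) := by
    have h := hg b (right_mem_Icc.mpr hab.le) a (left_mem_Icc.mpr hab.le)
    rw [abs_of_pos (sub_pos.mpr hab)] at h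
    rw [abs_mul]
    exact mul_le_mul_of_nonneg_left h (abs_nonneg _)
  have hrest := abs_uniformRSSum_two_pow_sub_le hab hs hf hg K
  have htri := abs_sub_abs_le_abs_sub (uniformRSSum a b f g (2 ^ K)) (f a * (g b - g a))
  calc _ ≤ |f a| * (Cg * (b - a) ^ γ) +
        Cf * Cg * (b - a) ^ (γ + δ) * (1 - (2 : ℝ) ^ (1 - (γ + δ)))⁻¹ := by linarith
    _ = _ := by ring

end UniformRSSum

theorem IsRiemannStieltjesLimit.tendsto_uniformRSSum {a b L : ℝ} {f g : ℝ → ℝ} (hab : a < b)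
    (h : IsRiemannStieltjesLimit a b f g L) : Tendsto (uniformRSSum a b f g) atTop (𝓝 L) := by
  rw [Metric.tendsto_atTop]
  intro ε hε
  obtain ⟨ρ, hρ, hsum⟩ := h ε hε
  obtain ⟨N, hN⟩ := exists_nat_gt ((b - a) / ρ)
  have hN0 : (0 : ℝ) < N := (div_pos (sub_pos.mpr hab) hρ).trans hN
  refine ⟨N, fun n hNn => ?_⟩
  have hNn : (N : ℝ) ≤ n := by exact_mod_cast hNn
  have hn : (0 : ℝ) < n := hN0.trans_le hNn
  have hmesh : (b - a) / n < ρ := by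
    rw [div_lt_iff₀ hn]
    rw [div_lt_iff₀ hρ] at hN
    nlinarith
  have hcell : ∀ k : Fin n,
      uniformNode a b n k.succ - uniformNode a b n k.castSucc = (b - a) / n :=
    fun k => uniformNode_succ_sub
  have := hsum n (fun i => uniformNode a b n i) (by simp [uniformNode])
    (by simp [uniformNode, hn.ne']) (fun k => by linarith [hcell k, div_pos (sub_pos.mpr hab) hn])
    (fun k => (hcell k).symm ▸ hmesh)
  simp only [Fin.val_succ, Fin.val_castSucc] at this
  rwa [Fin.sum_univ_eq_sum_range (fun i => f (uniformNode a b n i) *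
    (g (uniformNode a b n (i + 1)) - g (uniformNode a b n i)))] at this

theorem young_integral_joint_continuity_general (a b : ℝ) (hab : a < b) (γ δ : ℝ)
    (hsum : 1 < γ + δ)
    (ω W : ℝ → ℝ) (ωm Wm : ℕ → ℝ → ℝ)
    (Cω CW : ℝ) (hω : HolderBoundOn Cω γ a b ω) (hW : HolderBoundOn CW δ a b W)
    (Cdω : ℕ → ℝ) (hdω : ∀ m, HolderBoundOn (Cdω m) γ a b (fun x => ωm m x - ω x))
    (hdω0 : Tendsto Cdω atTop (nhds 0))
    (CdW : ℕ → ℝ) (hdW : ∀ m, HolderBoundOn (CdW m) δ a b (fun x => Wm m x - W x))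
    (hdW0 : Tendsto CdW atTop (nhds 0))
    (Msup : ℕ → ℝ) (hMsup : ∀ m, ∀ x ∈ Icc a b, |Wm m x - W x| ≤ Msup m)
    (hMsup0 : Tendsto Msup atTop (nhds 0))
    (L : ℕ → ℝ) (hL : ∀ m, IsRiemannStieltjesLimit a b (Wm m) (ωm m) (L m))
    (L₀ : ℝ) (hL₀ : IsRiemannStieltjesLimit a b W ω L₀) :
    Tendsto L atTop (nhds L₀) := by
  set κ := (1 - (2 : ℝ) ^ (1 - (γ + δ)))⁻¹
  set B : ℕ → ℝ := fun m =>
    (|Wm m a - W a| * (b - a) ^ γ + κ * CdW m * (b - a) ^ (γ + δ)) * (Cdω m + Cω) +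
      (|W a| * (b - a) ^ γ + κ * CW * (b - a) ^ (γ + δ)) * Cdω m
  have hLB : ∀ m, |L m - L₀| ≤ B m := by
    intro m
    have hωm : HolderBoundOn (Cdω m + Cω) γ a b (ωm m) := by simpa using (hdω m).add hω
    have hdyadic := (((hL m).tendsto_uniformRSSum hab).sub (hL₀.tendsto_uniformRSSum hab)).comp
      (tendsto_pow_atTop_atTop_of_one_lt one_lt_two)
    refine le_of_tendsto' hdyadic.abs fun K => ?_
    simp only [Function.comp_apply, uniformRSSum_sub_uniformRSSum]
    exact (abs_add_le _ _).trans (add_le_add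
      (abs_uniformRSSum_two_pow_le hab hsum (hdW m) hωm K)
      (abs_uniformRSSum_two_pow_le hab hsum hW (hdω m) K))
  have hWa : Tendsto (fun m => |Wm m a - W a|) atTop (𝓝 0) :=
    squeeze_zero (fun _ => abs_nonneg _) (fun m => hMsup m a (left_mem_Icc.mpr hab.le)) hMsup0
  have hB : Tendsto B atTop (𝓝 0) := by
    have := (((hWa.mul_const ((b - a) ^ γ)).add
      ((hdW0.const_mul κ).mul_const ((b - a) ^ (γ + δ)))).mul (hdω0.add_const Cω)).add
        (hdω0.const_mul (|W a| * (b - a) ^ γ + κ * CW * (b - a) ^ (γ + δ)))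
    simpa using this
  rw [tendsto_iff_norm_sub_tendsto_zero]
  exact squeeze_zero (fun _ => norm_nonneg _) hLB hB

/-- Joint continuity of the pathwise Young integral: if `ω_m, ω` are `γ`-Hölder,
`W_m, W` are `δ`-Hölder with `γ + δ > 1`, and `[ω_m − ω]_γ → 0`, `‖W_m − W‖_∞ → 0`,
`[W_m − W]_δ → 0`, then the pathwise integrals `L_m = ∫_a^b W_m dω_m` converge to
`L₀ = ∫_a^b W dω`. -/
theorem young_integral_joint_continuity (a b : ℝ) (hab : a < b) (γ δ : ℝ)
    (hγ0 : 0 < γ) (hγ1 : γ ≤ 1) (hδ0 : 0 < δ) (hδ1 : δ ≤ 1) (hsum : 1 < γ + δ)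
    (ω W : ℝ → ℝ) (ωm Wm : ℕ → ℝ → ℝ)
    (Cω CW : ℝ) (hω : HolderBoundOn Cω γ a b ω) (hW : HolderBoundOn CW δ a b W)
    (Cωm CWm : ℕ → ℝ)
    (hωm : ∀ m, HolderBoundOn (Cωm m) γ a b (ωm m))
    (hWm : ∀ m, HolderBoundOn (CWm m) δ a b (Wm m))
    (Cdω : ℕ → ℝ) (hdω : ∀ m, HolderBoundOn (Cdω m) γ a b (fun x => ωm m x - ω x))
    (hdω0 : Tendsto Cdω atTop (nhds 0))
    (CdW : ℕ → ℝ) (hdW : ∀ m, HolderBoundOn (CdW m) δ a b (fun x => Wm m x - W x))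
    (hdW0 : Tendsto CdW atTop (nhds 0))
    (Msup : ℕ → ℝ) (hMsup : ∀ m, ∀ x ∈ Icc a b, |Wm m x - W x| ≤ Msup m)
    (hMsup0 : Tendsto Msup atTop (nhds 0))
    (L : ℕ → ℝ) (hL : ∀ m, IsRiemannStieltjesLimit a b (Wm m) (ωm m) (L m))
    (L₀ : ℝ) (hL₀ : IsRiemannStieltjesLimit a b W ω L₀) :
    Tendsto L atTop (nhds L₀) :=
  young_integral_joint_continuity_general a b hab γ δ hsum ω W ωm Wm Cω CW hω hW Cdω hdω hdω0 CdW
    hdW hdW0 Msup hMsup hMsup0 L hL L₀ hL₀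
end

section
/- (Breeden–Litzenberger replication formula.) Let a ≤ K₀ ≤ b be reals and let W : [a,b] → ℝ be twice continuously differentiable. Then for every x ∈ [a,b]: W(x) = W(K₀) + W′(K₀)·(x − K₀) + ∫_a^{K₀} W″(K)·max(K − x, 0) dK + ∫_{K₀}^{b} W″(K)·max(x − K, 0) dK. -/
/-!
Taylor's formula with integral remainder gives
`W x = W K₀ + W' K₀ (x - K₀) + ∫_{K₀}^x W''(K) (x - K) dK`.
Since `x - K = max (x - K) 0 - max (K - x) 0`, and the call payoff `max (x - K) 0` vanishes for
strikes `K ≥ x` while the put payoff `max (K - x) 0` vanishes for `K ≤ x`, the remainder splits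
into the put integral over `[a, K₀]` plus the call integral over `[K₀, b]`, whatever the position
of `x` relative to `K₀`.
-/

open Set intervalIntegral
open MeasureTheory Topology

theorem integral_eq_sub_of_hasDerivWithinAt_of_uIcc_subset {E : Type*} [NormedAddCommGroup E]
    [NormedSpace ℝ E] [CompleteSpace E] {f f' : ℝ → E} {s : Set ℝ} {c x : ℝ}
    (hf : ∀ y ∈ s, HasDerivWithinAt f (f' y) s y) (hcx : uIcc c x ⊆ s)
    (hint : IntervalIntegrable f' volume c x) :
    ∫ y in c..x, f' y = f x - f c := by
  refine integral_eq_sub_of_hasDeriv_right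
    (fun y hy => (hf y (hcx hy)).continuousWithinAt.mono hcx) (fun y hy => ?_) hint
  have hs : s ∈ 𝓝 y := Filter.mem_of_superset (Icc_mem_nhds hy.1 hy.2) hcx
  exact ((hf y (hcx (Ioo_subset_Icc_self hy))).hasDerivAt hs).hasDerivWithinAt

theorem taylor_integral_remainder_one {W W' W'' : ℝ → ℝ} {s : Set ℝ} {c x : ℝ}
    (hW : ∀ y ∈ s, HasDerivWithinAt W (W' y) s y)
    (hW' : ∀ y ∈ s, HasDerivWithinAt W' (W'' y) s y)
    (hW'' : ContinuousOn W'' s) (hcx : uIcc c x ⊆ s) :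
    W x = W c + W' c * (x - c) + ∫ K in c..x, W'' K * (x - K) := by
  have hderiv : ∀ y ∈ s,
      HasDerivWithinAt (fun K => W' K * (x - K) + W K) (W'' y * (x - y)) s y := fun y hy =>
    (((hW' y hy).mul ((hasDerivWithinAt_id y s).const_sub x)).add (hW y hy)).congr_deriv
      (by rw [id]; ring)
  have hint : IntervalIntegrable (fun K => W'' K * (x - K)) volume c x :=
    ((hW''.mono hcx).mul (continuous_const.sub continuous_id).continuousOn).intervalIntegrable
  rw [integral_eq_sub_of_hasDerivWithinAt_of_uIcc_subset hderiv hcx hint]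
  ring

theorem integral_mul_max_left_sub_zero_eq_zero (f : ℝ → ℝ) {x b : ℝ} (hxb : x ≤ b) :
    ∫ K in x..b, f K * max (x - K) 0 = 0 := by
  rw [integral_congr (g := fun _ => 0) fun K hK => ?_, intervalIntegral.integral_zero]
  rw [uIcc_of_le hxb] at hK
  simp [max_eq_right (sub_nonpos.mpr hK.1)]

theorem integral_mul_max_sub_right_zero_eq_zero (f : ℝ → ℝ) {a x : ℝ} (hax : a ≤ x) :
    ∫ K in a..x, f K * max (K - x) 0 = 0 := by
  rw [integral_congr (g := fun _ => 0) fun K hK => ?_, intervalIntegral.integral_zero]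
  rw [uIcc_of_le hax] at hK
  simp [max_eq_right (sub_nonpos.mpr hK.2)]

theorem integral_mul_sub_eq_put_add_call {f : ℝ → ℝ} {a b K₀ x : ℝ}
    (hf : IntervalIntegrable f volume a b) (hK₀ : K₀ ∈ Icc a b)
    (hx : x ∈ Icc a b) :
    ∫ K in K₀..x, f K * (x - K) =
      (∫ K in a..K₀, f K * max (K - x) 0) + ∫ K in K₀..b, f K * max (x - K) 0 := by
  have hint : ∀ g : ℝ → ℝ, Continuous g → ∀ c ∈ Icc a b, ∀ d ∈ Icc a b,
      IntervalIntegrable (fun K => f K * g K) volume c d := fun g hg c hc d hd =>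
    (hf.mono_set (uIcc_subset_uIcc (Icc_subset_uIcc hc) (Icc_subset_uIcc hd))).mul_continuousOn
      hg.continuousOn
  have hput := hint (fun K => max (K - x) 0) (by fun_prop)
  have hcall := hint (fun K => max (x - K) 0) (by fun_prop)
  have ha : a ∈ Icc a b := left_mem_Icc.mpr (hK₀.1.trans hK₀.2)
  have hb : b ∈ Icc a b := right_mem_Icc.mpr (hK₀.1.trans hK₀.2)
  rw [← integral_add_adjacent_intervals (hput a ha x hx) (hput x hx K₀ hK₀),
    ← integral_add_adjacent_intervals (hcall K₀ hK₀ x hx) (hcall x hx b hb),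
    integral_mul_max_sub_right_zero_eq_zero f hx.1, integral_mul_max_left_sub_zero_eq_zero f hx.2,
    integral_symm K₀ x, zero_add, add_zero, neg_add_eq_sub,
    ← integral_sub (hcall K₀ hK₀ x hx) (hput K₀ hK₀ x hx)]
  congr with K
  rw [← mul_sub, ← neg_sub x K, max_zero_sub_max_neg_zero_eq_self]

/-- Breeden–Litzenberger replication formula: a twice continuously differentiable
state-contingent payoff `W` on `[a,b]` decomposes, for every `x ∈ [a,b]`, as cash
`W(K₀)`, a forward position `W′(K₀)(x − K₀)`, and portfolios of puts `max(K − x, 0)` and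
calls `max(x − K, 0)` with densities `W″(K)` over strikes `K` below and above `K₀`. -/
theorem breeden_litzenberger (a b K₀ : ℝ) (haK : a ≤ K₀) (hKb : K₀ ≤ b)
    (W W' W'' : ℝ → ℝ)
    (hW : ∀ x ∈ Icc a b, HasDerivWithinAt W (W' x) (Icc a b) x)
    (hW' : ∀ x ∈ Icc a b, HasDerivWithinAt W' (W'' x) (Icc a b) x)
    (hW'' : ContinuousOn W'' (Icc a b)) :
    ∀ x ∈ Icc a b,
      W x = W K₀ + W' K₀ * (x - K₀)
        + (∫ K in a..K₀, W'' K * max (K - x) 0)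
        + ∫ K in K₀..b, W'' K * max (x - K) 0 := by
  intro x hx
  have hK₀ : K₀ ∈ Icc a b := ⟨haK, hKb⟩
  rw [taylor_integral_remainder_one hW hW' hW'' (uIcc_subset_Icc hK₀ hx),
    integral_mul_sub_eq_put_add_call (hW''.intervalIntegrable_of_Icc (haK.trans hKb)) hK₀ hx]
  ring
end
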